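/- Let α > 0 be real, d ≥ 1 an integer, z = Σ_{k=1}^d k^{−α}, and for each i ∈ {1,…,d} let σ_i be a permutation of {1,…,d}. Set λ_{ij} = i^{−α}/z and δ_{ij} = (σ_i(j))^{−α}/z. Then for every integer t ≥ 0, ( Σ_{i=1}^d Σ_{j=1}^d λ_{ij} (1 − z·λ_{ij})^{2t} δ_{ij}² ) / ( Σ_{i=1}^d Σ_{j=1}^d λ_{ij} δ_{ij}² ) = ( Σ_{k=1}^d k^{−α}(1 − k^{−α})^{2t} ) / ( Σ_{k=1}^d k^{−α} ). -/
import Mathlib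


/-- Reduction of the gradient-descent dynamics: with eigenvalues
`λ_{ij} = i^{−α}/z` and distances `δ_{ij} = σ_i(j)^{−α}/z` (σ_i permutations of
`{1,…,d}`), the normalized loss after `t` steps collapses to a single `d`-term
sum. -/
theorem stmt11 (α : ℝ) (hα : 0 < α) (d : ℕ) (hd : 1 ≤ d)
    (σ : ℕ → Equiv.Perm ℕ)
    (hσ : ∀ i ∈ Finset.Icc 1 d, ∀ j ∈ Finset.Icc 1 d, σ i j ∈ Finset.Icc 1 d)
    (z : ℝ) (hz : z = ∑ k ∈ Finset.Icc 1 d, (k : ℝ) ^ (-α))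
    (t : ℕ) :
    (∑ i ∈ Finset.Icc 1 d, ∑ j ∈ Finset.Icc 1 d,
        ((i : ℝ) ^ (-α) / z) * (1 - z * ((i : ℝ) ^ (-α) / z)) ^ (2 * t) *
          ((σ i j : ℝ) ^ (-α) / z) ^ 2) /
      (∑ i ∈ Finset.Icc 1 d, ∑ j ∈ Finset.Icc 1 d,
        ((i : ℝ) ^ (-α) / z) * ((σ i j : ℝ) ^ (-α) / z) ^ 2) =
    (∑ k ∈ Finset.Icc 1 d, (k : ℝ) ^ (-α) * (1 - (k : ℝ) ^ (-α)) ^ (2 * t)) /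
      (∑ k ∈ Finset.Icc 1 d, (k : ℝ) ^ (-α)) := by
  have hzpos : 0 < z := by
    rw [hz]
    apply Finset.sum_pos
    · intro k hk
      have hk1 : 1 ≤ k := (Finset.mem_Icc.mp hk).1
      have : (0 : ℝ) < k := by exact_mod_cast hk1
      exact Real.rpow_pos_of_pos this _
    · exact ⟨1, Finset.mem_Icc.mpr ⟨le_refl 1, hd⟩⟩
  have hzne : z ≠ 0 := ne_of_gt hzpos
  set S : ℝ := ∑ j ∈ Finset.Icc 1 d, ((j : ℝ) ^ (-α) / z) ^ 2 with hS
  have hSpos : 0 < S := by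
    apply Finset.sum_pos
    · intro k hk
      have hk1 : 1 ≤ k := (Finset.mem_Icc.mp hk).1
      have hk0 : (0 : ℝ) < k := by exact_mod_cast hk1
      have := Real.rpow_pos_of_pos hk0 (-α)
      positivity
    · exact ⟨1, Finset.mem_Icc.mpr ⟨le_refl 1, hd⟩⟩
  have himg : ∀ i ∈ Finset.Icc 1 d,
      Finset.image (σ i) (Finset.Icc 1 d) = Finset.Icc 1 d := by
    intro i hi
    apply Finset.eq_of_subset_of_card_le
    · intro x hx
      obtain ⟨j, hj, rfl⟩ := Finset.mem_image.mp hx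
      exact hσ i hi j hj
    · rw [Finset.card_image_of_injective _ (σ i).injective]
  have hin : ∀ i ∈ Finset.Icc 1 d,
      ∑ j ∈ Finset.Icc 1 d, ((σ i j : ℝ) ^ (-α) / z) ^ 2 = S := by
    intro i hi
    rw [hS]
    conv_rhs => rw [← himg i hi]
    rw [Finset.sum_image fun a _ b _ h => (σ i).injective h]
  have hnum : ∀ i ∈ Finset.Icc 1 d,
      ∑ j ∈ Finset.Icc 1 d,
        ((i : ℝ) ^ (-α) / z) * (1 - z * ((i : ℝ) ^ (-α) / z)) ^ (2 * t) *
          ((σ i j : ℝ) ^ (-α) / z) ^ 2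
      = ((i : ℝ) ^ (-α) / z) * (1 - (i : ℝ) ^ (-α)) ^ (2 * t) * S := by
    intro i hi
    rw [← Finset.mul_sum, hin i hi, mul_div_cancel₀ _ hzne]
  have hden : ∀ i ∈ Finset.Icc 1 d,
      ∑ j ∈ Finset.Icc 1 d,
        ((i : ℝ) ^ (-α) / z) * ((σ i j : ℝ) ^ (-α) / z) ^ 2
      = ((i : ℝ) ^ (-α) / z) * S := by
    intro i hi
    rw [← Finset.mul_sum, hin i hi]
  rw [Finset.sum_congr rfl hnum, Finset.sum_congr rfl hden,
    ← Finset.sum_mul, ← Finset.sum_mul,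
    mul_div_mul_right _ _ (ne_of_gt hSpos)]
  have h1 : ∑ i ∈ Finset.Icc 1 d,
      ((i : ℝ) ^ (-α) / z) * (1 - (i : ℝ) ^ (-α)) ^ (2 * t)
      = (∑ k ∈ Finset.Icc 1 d, (k : ℝ) ^ (-α) * (1 - (k : ℝ) ^ (-α)) ^ (2 * t)) / z := by
    rw [Finset.sum_div]
    exact Finset.sum_congr rfl fun i _ => by ring
  have h2 : ∑ i ∈ Finset.Icc 1 d, ((i : ℝ) ^ (-α) / z)
      = (∑ k ∈ Finset.Icc 1 d, (k : ℝ) ^ (-α)) / z := by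
    rw [Finset.sum_div]
  rw [h1, h2]
  field_simp
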